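/- Infinitesimal form of the Virasoro coadjoint action: let f, ξ : ℝ → ℝ be smooth, let t, τ ∈ ℝ, and for s ∈ ℝ set φ_s(τ) = τ + s·ξ(τ). Then the function s ↦ (φ_s'(τ))² f(φ_s(τ)) − (t/12)·S(φ_s)(τ) is differentiable at s = 0 with derivative 2ξ'(τ)f(τ) + ξ(τ)f'(τ) − (t/12)·ξ'''(τ). -/

import Mathlib

noncomputable def schwarzian (F : ℝ → ℝ) (τ : ℝ) : ℝ :=
  iteratedDeriv 3 F τ / deriv F τ - (3 / 2) * (iteratedDeriv 2 F τ / deriv F τ) ^ 2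

/-- Infinitesimal form of the Virasoro coadjoint action: with `φ_s = id + sξ`,
the function `s ↦ (φ_s'(τ))² f(φ_s(τ)) − (t/12)·S(φ_s)(τ)` is differentiable at
`s = 0` with derivative `2ξ'(τ)f(τ) + ξ(τ)f'(τ) − (t/12)·ξ'''(τ)`. -/
theorem coadAction_infinitesimal (f ξ : ℝ → ℝ) (t τ : ℝ)
    (hf : ContDiff ℝ (⊤ : ℕ∞) f) (hξ : ContDiff ℝ (⊤ : ℕ∞) ξ) :
    HasDerivAt
      (fun s : ℝ =>
        (deriv (fun x : ℝ => x + s * ξ x) τ) ^ 2 * f (τ + s * ξ τ)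
          - (t / 12) * schwarzian (fun x : ℝ => x + s * ξ x) τ)
      (2 * deriv ξ τ * f τ + ξ τ * deriv f τ - (t / 12) * iteratedDeriv 3 ξ τ) 0 := by
  have hξi : ContDiff ℝ (⊤ : ℕ∞) ξ := hξ.of_le (by simp)
  have hξd : Differentiable ℝ ξ := hξi.differentiable (by simp)
  have hξd1 : Differentiable ℝ (deriv ξ) := ((contDiff_infty_iff_deriv.mp hξi).2).differentiable (by simp)
  have hξd2 : Differentiable ℝ (deriv (deriv ξ)) := ((contDiff_infty_iff_deriv.mp (contDiff_infty_iff_deriv.mp hξi).2).2).differentiable (by simp)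
  -- deriv of φ_s
  have hA : ∀ s : ℝ, deriv (fun x : ℝ => x + s * ξ x) = fun x => 1 + s * deriv ξ x := by
    intro s
    funext x
    exact (((hasDerivAt_id x).add ((hξd x).hasDerivAt.const_mul s)).deriv).trans (by ring)
  have hA2 : ∀ s : ℝ, deriv (fun x : ℝ => 1 + s * deriv ξ x) = fun x => s * deriv (deriv ξ) x := by
    intro s
    funext x
    exact ((((hξd1 x).hasDerivAt.const_mul s).const_add 1).deriv)
  have hB : ∀ s : ℝ, iteratedDeriv 2 (fun x : ℝ => x + s * ξ x) τ
      = s * iteratedDeriv 2 ξ τ := by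
    intro s
    rw [show (2:ℕ) = 1 + 1 from rfl, iteratedDeriv_succ, iteratedDeriv_one, hA s,
      hA2 s, iteratedDeriv_succ, iteratedDeriv_one]
  have hC : ∀ s : ℝ, iteratedDeriv 3 (fun x : ℝ => x + s * ξ x) τ
      = s * iteratedDeriv 3 ξ τ := by
    intro s
    rw [show (3:ℕ) = 2 + 1 from rfl, iteratedDeriv_succ]
    have : iteratedDeriv 2 (fun x : ℝ => x + s * ξ x) = fun x => s * deriv (deriv ξ) x := by
      rw [show (2:ℕ) = 1 + 1 from rfl, iteratedDeriv_succ, iteratedDeriv_one, hA s, hA2 s]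
    rw [this]
    have : iteratedDeriv 3 ξ τ = deriv (deriv (deriv ξ)) τ := by
      rw [show (3:ℕ) = 1 + 1 + 1 from rfl, iteratedDeriv_succ, iteratedDeriv_succ,
        iteratedDeriv_one]
    rw [this, (((hξd2 τ).hasDerivAt.const_mul s).deriv)]
  set a := ξ τ
  set b := deriv ξ τ
  set c := iteratedDeriv 2 ξ τ
  set d := iteratedDeriv 3 ξ τ
  have hA' : ∀ s : ℝ, deriv (fun x : ℝ => x + s * ξ x) τ = 1 + s * b := by
    intro s; rw [hA s]
  have heq : (fun s : ℝ =>
        (deriv (fun x : ℝ => x + s * ξ x) τ) ^ 2 * f (τ + s * ξ τ)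
          - (t / 12) * schwarzian (fun x : ℝ => x + s * ξ x) τ)
      = fun s : ℝ => (1 + s * b) ^ 2 * f (τ + s * a)
          - (t / 12) * ((s * d) / (1 + s * b)
            - (3 / 2) * ((s * c) / (1 + s * b)) ^ 2) := by
    funext s
    rw [schwarzian, hA' s, hB s, hC s]
  rw [heq]
  have hfd : Differentiable ℝ f := hf.differentiable (by simp)
  have h1 : HasDerivAt (fun s : ℝ => 1 + s * b) b 0 := by
    simpa using ((hasDerivAt_id (0:ℝ)).mul_const b).const_add 1
  have h2 : HasDerivAt (fun s : ℝ => (1 + s * b) ^ 2) (2 * (1 + 0 * b) ^ 1 * b) 0 := h1.pow 2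
  have hin : HasDerivAt (fun s : ℝ => τ + s * a) a 0 := by
    simpa using ((hasDerivAt_id (0:ℝ)).mul_const a).const_add τ
  have h3 : HasDerivAt (fun s : ℝ => f (τ + s * a)) (deriv f (τ + 0 * a) * a) 0 :=
    (hfd (τ + 0 * a)).hasDerivAt.comp 0 hin
  have h4 : HasDerivAt (fun s : ℝ => s * d) d 0 := by
    simpa using (hasDerivAt_id (0:ℝ)).mul_const d
  have h4c : HasDerivAt (fun s : ℝ => s * c) c 0 := by
    simpa using (hasDerivAt_id (0:ℝ)).mul_const c
  have hne : (1 + (0:ℝ) * b) ≠ 0 := by norm_num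
  have h5 : HasDerivAt (fun s : ℝ => s * d / (1 + s * b))
      ((d * (1 + 0 * b) - 0 * d * b) / (1 + 0 * b) ^ 2) 0 := h4.div h1 hne
  have h6 : HasDerivAt (fun s : ℝ => s * c / (1 + s * b))
      ((c * (1 + 0 * b) - 0 * c * b) / (1 + 0 * b) ^ 2) 0 := h4c.div h1 hne
  have h7 := h6.pow 2
  have H := (h2.mul h3).sub (((h5.sub (h7.const_mul (3/2:ℝ)))).const_mul (t/12))
  refine H.congr_deriv ?_
  norm_num
  ring
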